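/- Let W = W₁ × W₂ be a finite Coxeter group with S = S₁ ⊔ S₂ and ι₁ : Ω₁ → Ω, ι₂ : Ω₂ → Ω the parabolic morphisms. Then [ι₁(a), ι₂(b)] = 0 in Ω for all a ∈ Ψ₁ = Ψ(W₁,S₁) and b ∈ Ψ₂ = Ψ(W₂,S₂), i.e. the images of Ψ₁ and Ψ₂ in Ω commute elementwise. -/

import Mathlib

/-! For `s ∈ S₁`, `t ∈ S₂` we have `m_{st} = 2`, and the `v⁻¹`- and `v⁰`-coefficients of the
braid relation give `[x_s, e_t] = [x_t, e_s]` and `[x_s, x_t] = 0`; hence `e_s x_t e_s = x_t e_s`.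
So for `c, s ∈ S₁` every element `z` of the ring generated by the `e_t, x_t` (`t ∈ S₂`) maps the
right ideal `e_c Ω` into itself, and so does `[x_s, z]`, because `[x_s, -]` is a derivation.

For a transversal edge `X = E_I x_s E_J` pick `c ∈ J ∖ I`: then `E_I e_c = 0` and `e_c E_J = E_J`,
so if `z` commutes with `E_I` and `E_J`,
`[X, z] = E_I [x_s, z] E_J = E_I [x_s, z] e_c E_J = E_I e_c [x_s, z] e_c E_J = 0`.
Applied first with `z = e_c` (`c ∈ S₁`) to the edges of `Ψ₂`, this shows that `ι₂(Ψ₂)` centralizes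
all `e_c`, `c ∈ S₁`; applied then with `z ∈ ι₂(Ψ₂)` it gives the theorem. -/

open scoped TensorProduct

noncomputable section

namespace WGraphPaper

variable (k : Type*) [CommRing k] {B B₁ B₂ : Type*}

/-! ### Gyoja's W-graph algebra with coefficients in `k`
(`Omega ℤ M` is the W-graph algebra `Ω(W,S)` itself, `Omega k M` is `kΩ`). -/

/-- The free ring `k⟨e_b, x_b | b ∈ B⟩`; `Sum.inl b` encodes the generator `e_b` and
`Sum.inr b` encodes the generator `x_b`. -/
abbrev FreeGen (B : Type*) := FreeAlgebra k (B ⊕ B)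

def eGen (b : B) : FreeGen k B := FreeAlgebra.ι k (Sum.inl b)
def xGen (b : B) : FreeGen k B := FreeAlgebra.ι k (Sum.inr b)

/-- `altProd a b n` is the alternating product `a * b * a * ⋯` with `n` factors. -/
def altProd {A : Type*} [Monoid A] : A → A → ℕ → A
  | _, _, 0 => 1
  | a, b, n + 1 => a * altProd b a n

/-- The braid commutator `Δ_m(a,b) = (a b a ⋯) - (b a b ⋯)` (`m` factors each). -/
def braidComm {A : Type*} [Ring A] (m : ℕ) (a b : A) : A := altProd a b m - altProd b a m

/-- `ι(T_b) = -v⁻¹ e_b + v (1 - e_b) + x_b`, an element of `(FreeGen k B)[v,v⁻¹]`. -/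
def iotaT (b : B) : LaurentPolynomial (FreeGen k B) :=
  LaurentPolynomial.C (-(eGen k b)) * LaurentPolynomial.T (-1)
    + LaurentPolynomial.C (1 - eGen k b) * LaurentPolynomial.T 1
    + LaurentPolynomial.C (xGen k b)

/-- The coefficient of `v^n` in a Laurent polynomial. -/
def lcoeff {R : Type*} [Semiring R] (p : LaurentPolynomial R) (n : ℤ) : R :=
  (show ℤ →₀ R from AddMonoidAlgebra.coeff p) n

/-- The defining relations of Gyoja's W-graph algebra: the relations (a) and (b) together
with the vanishing of all Laurent coefficients `y^γ(s,t)` of the braid commutators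
`Δ_{m_{st}}(ι(T_s), ι(T_t))` (for `m_{st} < ∞`, i.e. `M s t ≠ 0`). -/
inductive OmegaRel (M : CoxeterMatrix B) : FreeGen k B → FreeGen k B → Prop
  | e_idem (b : B) : OmegaRel M (eGen k b * eGen k b) (eGen k b)
  | e_comm (b b' : B) : OmegaRel M (eGen k b * eGen k b') (eGen k b' * eGen k b)
  | ex (b : B) : OmegaRel M (eGen k b * xGen k b) (xGen k b)
  | xe (b : B) : OmegaRel M (xGen k b * eGen k b) 0
  | braid (b b' : B) (h : M b b' ≠ 0) (γ : ℤ) :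
      OmegaRel M (lcoeff (braidComm (M b b') (iotaT k b) (iotaT k b')) γ) 0

/-- Gyoja's W-graph algebra `Ω(W,S)` (for `k = ℤ`), resp. `kΩ(W,S)`, defined from
the Coxeter matrix of `(W,S)`. -/
abbrev Omega (M : CoxeterMatrix B) := RingQuot (OmegaRel k M)

/-- The image of the generator `e_b` in `Ω`. -/
def eOm (M : CoxeterMatrix B) (b : B) : Omega k M :=
  RingQuot.mkRingHom (OmegaRel k M) (eGen k b)

/-- The image of the generator `x_b` in `Ω`. -/
def xOm (M : CoxeterMatrix B) (b : B) : Omega k M :=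
  RingQuot.mkRingHom (OmegaRel k M) (xGen k b)

lemma commute_eOm (M : CoxeterMatrix B) (b b' : B) : Commute (eOm k M b) (eOm k M b') := by
  show _ = _
  rw [eOm, eOm, ← map_mul, ← map_mul]
  exact RingQuot.mkRingHom_rel (OmegaRel.e_comm b b')

lemma commute_oneSubEOm (M : CoxeterMatrix B) (b b' : B) :
    Commute (1 - eOm k M b) (1 - eOm k M b') :=
  (Commute.one_left _).sub_left ((Commute.one_right _).sub_right (commute_eOm k M b b'))

variable [Fintype B] [DecidableEq B] [DecidableEq B₁] [DecidableEq B₂]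

/-- The idempotent `E_I = (∏_{t ∈ I} e_t) (∏_{t ∈ S∖I} (1 - e_t))`. -/
def EOm (M : CoxeterMatrix B) (I : Finset B) : Omega k M :=
  (I.noncommProd (fun b => eOm k M b) (fun _ _ _ _ _ => commute_eOm k M _ _)) *
    ((Iᶜ).noncommProd (fun b => 1 - eOm k M b) (fun _ _ _ _ _ => commute_oneSubEOm k M _ _))

/-- The edge element `X_{IJ}^s = E_I x_s E_J`. -/
def XOm (M : CoxeterMatrix B) (I J : Finset B) (s : B) : Omega k M :=
  EOm k M I * xOm k M s * EOm k M J

/-- `I ← J` is an edge of the compatibility graph `Q_W`: `I ∖ J ≠ ∅` and no element of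
`I ∖ J` commutes (in `W`, i.e. `m_{st} = 2`) with an element of `J ∖ I`. -/
def QEdge (M : CoxeterMatrix B) (I J : Finset B) : Prop :=
  (I \ J).Nonempty ∧ ∀ s ∈ I \ J, ∀ t ∈ J \ I, M s t ≠ 2

/-- `I ⇆ J`: `I` and `J` are joined by a pair of transversal edges of `Q_W`. -/
def Transversal (M : CoxeterMatrix B) (I J : Finset B) : Prop :=
  QEdge M I J ∧ (J \ I).Nonempty

/-- The generators of the subalgebra `Ψ(W,S)`: all `E_I` and all transversal edge
elements `X_{IJ}`. -/
def psiGens (M : CoxeterMatrix B) : Set (Omega k M) :=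
  {a | ∃ I : Finset B, a = EOm k M I} ∪
    {a | ∃ I J : Finset B, ∃ s : B, Transversal M I J ∧ s ∈ I \ J ∧ a = XOm k M I J s}

/-- The subring `Ψ(W,S) ⊆ Ω(W,S)` generated by all `E_I` and all transversal edges. -/
def Psi (M : CoxeterMatrix B) : Subring (Omega k M) := Subring.closure (psiGens k M)

/-- The subalgebra `kΨ(W,S) ⊆ kΩ(W,S)` generated by all `E_I` and all transversal edges. -/
def PsiAlg (M : CoxeterMatrix B) : Subalgebra k (Omega k M) :=
  Algebra.adjoin k (psiGens k M)

/-! ### Products of Coxeter systems -/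

/-- The Coxeter matrix of the product `W₁ × W₂`, on `S = S₁ ⊔ S₂` (each element of `S₁`
commutes with each element of `S₂`). -/
def prodMatrix (M₁ : CoxeterMatrix B₁) (M₂ : CoxeterMatrix B₂) : CoxeterMatrix (B₁ ⊕ B₂) where
  M i j :=
    match i, j with
    | Sum.inl a, Sum.inl b => M₁ a b
    | Sum.inr a, Sum.inr b => M₂ a b
    | _, _ => 2
  isSymm := by
    unfold Matrix.IsSymm
    ext i j
    rcases i with a | a <;> rcases j with b | b <;>
      simp only [Matrix.transpose_apply] <;>
      first
        | exact M₁.symmetric b a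
        | exact M₂.symmetric b a
        | rfl
  diagonal i := by rcases i with a | a <;> simp [CoxeterMatrix.diagonal]
  off_diagonal i j h := by
    rcases i with a | a <;> rcases j with b | b
    · exact M₁.off_diagonal a b (by rintro rfl; exact h rfl)
    · simp
    · simp
    · exact M₂.off_diagonal a b (by rintro rfl; exact h rfl)

def inlEmb : B₁ ↪ B₁ ⊕ B₂ := ⟨Sum.inl, Sum.inl_injective⟩
def inrEmb : B₂ ↪ B₁ ⊕ B₂ := ⟨Sum.inr, Sum.inr_injective⟩

/-- The subset `I ⊔ K` of `S = S₁ ⊔ S₂`, for `I ⊆ S₁` and `K ⊆ S₂`. -/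
def fjoin (I : Finset B₁) (K : Finset B₂) : Finset (B₁ ⊕ B₂) :=
  I.map inlEmb ∪ K.map inrEmb

/-- The part `I₁ = I ∩ S₁` of a subset `I ⊆ S = S₁ ⊔ S₂`. -/
def part1 (I : Finset (B₁ ⊕ B₂)) : Finset B₁ :=
  I.preimage Sum.inl Sum.inl_injective.injOn

/-- The part `I₂ = I ∩ S₂` of a subset `I ⊆ S = S₁ ⊔ S₂`. -/
def part2 (I : Finset (B₁ ⊕ B₂)) : Finset B₂ :=
  I.preimage Sum.inr Sum.inr_injective.injOn

variable (M₁ : CoxeterMatrix B₁) (M₂ : CoxeterMatrix B₂)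

/-- `f` is the parabolic morphism `ι₁ : Ω₁ → Ω` (it sends `e_s ↦ e_s`, `x_s ↦ x_s`
for `s ∈ S₁`). -/
def Parab1Cond (f : Omega k M₁ → Omega k (prodMatrix M₁ M₂)) : Prop :=
  ∀ b : B₁, f (eOm k M₁ b) = eOm k (prodMatrix M₁ M₂) (Sum.inl b) ∧
    f (xOm k M₁ b) = xOm k (prodMatrix M₁ M₂) (Sum.inl b)

/-- `f` is the parabolic morphism `ι₂ : Ω₂ → Ω` (it sends `e_s ↦ e_s`, `x_s ↦ x_s`
for `s ∈ S₂`). -/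
def Parab2Cond (f : Omega k M₂ → Omega k (prodMatrix M₁ M₂)) : Prop :=
  ∀ b : B₂, f (eOm k M₂ b) = eOm k (prodMatrix M₁ M₂) (Sum.inr b) ∧
    f (xOm k M₂ b) = xOm k (prodMatrix M₁ M₂) (Sum.inr b)

/-- `t` is the morphism `τ : Ω → Ω₁ ⊗ Ω₂` of the paper: it sends `e_s ↦ e_s ⊗ 1`,
`x_s ↦ x_s ⊗ 1` for `s ∈ S₁` and `e_s ↦ 1 ⊗ e_s`, `x_s ↦ 1 ⊗ x_s` for `s ∈ S₂`. -/
def TauCond (t : Omega k (prodMatrix M₁ M₂) → Omega k M₁ ⊗[k] Omega k M₂) : Prop :=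
  (∀ b : B₁, t (eOm k (prodMatrix M₁ M₂) (Sum.inl b)) = eOm k M₁ b ⊗ₜ[k] 1 ∧
      t (xOm k (prodMatrix M₁ M₂) (Sum.inl b)) = xOm k M₁ b ⊗ₜ[k] 1) ∧
  (∀ b : B₂, t (eOm k (prodMatrix M₁ M₂) (Sum.inr b)) = 1 ⊗ₜ[k] eOm k M₂ b ∧
      t (xOm k (prodMatrix M₁ M₂) (Sum.inr b)) = 1 ⊗ₜ[k] xOm k M₂ b)



/-- The coefficientwise extension of a ring homomorphism to Laurent polynomial rings. -/
def laurentMap {R A : Type*} [Semiring R] [Semiring A] (f : R →+* A) :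
    LaurentPolynomial R →+* LaurentPolynomial A :=
  AddMonoidAlgebra.liftNCRingHom (LaurentPolynomial.C.comp f)
    { toFun := fun n => LaurentPolynomial.T (Multiplicative.toAdd n)
      map_one' := LaurentPolynomial.T_zero
      map_mul' := fun _ _ => LaurentPolynomial.T_add _ _ }
    (fun _ n => (LaurentPolynomial.commute_T (Multiplicative.toAdd n) _).symm)

/-- `k` is a good ring for `(W,S)`: it contains `2cos(2π/m_{st})` for all `s,t ∈ S`. -/
def GoodRing (M : CoxeterMatrix B) (k : Subring ℂ) : Prop :=
  ∀ i j : B, M i j ≠ 0 → (2 * Complex.cos (2 * Real.pi / (M i j : ℂ))) ∈ k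

/-- The irreducible complex characters of a finite group `G`. -/
def IrrChar (G : Type) [Group G] : Type :=
  {χ : G → ℂ // ∃ V : FDRep ℂ G, CategoryTheory.Simple V ∧ χ = FDRep.character V}

/-- The degree `d_λ` of an irreducible character `λ` (its value at `1`). -/
def IrrChar.degree {G : Type} [Group G] (χ : IrrChar G) : ℕ := ⌊(χ.val 1).re⌋₊

variable {ι : Type*}

/-- (Z1): the `F^λ` are a decomposition of the identity into orthogonal idempotents. -/
def Z1 {A : Type*} [Ring A] (F : ι → A) : Prop :=
  (∀ l, F l * F l = F l) ∧ (∀ l m, l ≠ m → F l * F m = 0) ∧ ∑ᶠ l, F l = 1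

variable [Fintype B] [DecidableEq B]

/-- (Z2): the decomposition is compatible with the one coming from the path-algebra
structure: `E_I F^λ = F^λ E_I`. -/
def Z2 (M : CoxeterMatrix B) (F : ι → Omega k M) : Prop :=
  ∀ l (I : Finset B), EOm k M I * F l = F l * EOm k M I

/-- (Z3), with a specified partial order `le`: only "downward edges" exist,
i.e. `F^λ Ω F^μ ≠ 0 → λ ⪯ μ`. -/
def Z3At {A : Type*} [Ring A] (F : ι → A) (le : ι → ι → Prop) : Prop :=
  ∀ l m, (∃ a : A, F l * a * F m ≠ 0) → le l m

/-- (Z3): there is a partial order on `Irr(W)` such that only "downward edges" exist. -/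
def Z3 {A : Type*} [Ring A] (F : ι → A) : Prop :=
  ∃ le : ι → ι → Prop, IsPartialOrder ι le ∧ Z3At F le

/-- (Z4): there are surjective `k`-algebra morphisms `k^{d_λ×d_λ} ↠ F^λ kΩ F^λ`. -/
def Z4 (M : CoxeterMatrix B) (F : ι → Omega k M) (d : ι → ℕ) : Prop :=
  ∀ l, ∃ ψ : Matrix (Fin (d l)) (Fin (d l)) k →ₗ[k] Omega k M,
    (∀ x y, ψ (x * y) = ψ x * ψ y) ∧ ψ 1 = F l ∧
      Set.range ψ = {z | ∃ a : Omega k M, z = F l * a * F l}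

/-- (Z5): `F^λ X_{IJ} F^λ ∈ kΨ(W,S)` for all edges `I ← J` of `Q_W`. -/
def Z5 (M : CoxeterMatrix B) (F : ι → Omega k M) : Prop :=
  ∀ l (I J : Finset B) (s : B), QEdge M I J → s ∈ I \ J →
    F l * XOm k M I J s * F l ∈ PsiAlg k M

/-- (Z6): `F^λ ∈ kΨ(W,S)`. -/
def Z6 (M : CoxeterMatrix B) (F : ι → Omega k M) : Prop :=
  ∀ l, F l ∈ PsiAlg k M

/-- The family satisfies all of (Z1)–(Z6), i.e. the strong W-graph decomposition
conjecture holds via this family (`d` is the degree function on `Irr(W)`). -/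
def StrongZ (M : CoxeterMatrix B) (F : ι → Omega k M) (d : ι → ℕ) : Prop :=
  Z1 F ∧ Z2 k M F ∧ Z3 F ∧ Z4 k M F d ∧ Z5 k M F ∧ Z6 k M F

/-- The maximal length (number of steps) of a strict chain for the relation `le`. -/
def orderHeight (le : ι → ι → Prop) : ℕ :=
  sSup {n | ∃ c : Fin (n + 1) → ι, Function.Injective c ∧
    ∀ i j : Fin (n + 1), i < j → le (c i) (c j)}




section LaurentCoefficients

variable {R : Type*}

lemma lcoeff_add [Semiring R] (p q : LaurentPolynomial R) (n : ℤ) :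
    lcoeff (p + q) n = lcoeff p n + lcoeff q n := rfl

lemma lcoeff_sub [Ring R] (p q : LaurentPolynomial R) (n : ℤ) :
    lcoeff (p - q) n = lcoeff p n - lcoeff q n := rfl

lemma lcoeff_single [Semiring R] (m : ℤ) (a : R) (n : ℤ) :
    lcoeff (AddMonoidAlgebra.single m a : LaurentPolynomial R) n = if m = n then a else 0 :=
  Finsupp.single_apply

variable {D : Type*}

lemma iotaT_eq_single (b : D) : iotaT k b =
    .single (-1) (-eGen k b) + .single 1 (1 - eGen k b) + .single 0 (xGen k b) := by
  simp only [iotaT, LaurentPolynomial.single_eq_C_mul_T, LaurentPolynomial.T_zero, mul_one]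

lemma lcoeff_braidComm_two_neg_one (b b' : D) :
    lcoeff (braidComm 2 (iotaT k b) (iotaT k b')) (-1) =
      (eGen k b' * xGen k b + xGen k b' * eGen k b)
        - (eGen k b * xGen k b' + xGen k b * eGen k b') := by
  simp only [braidComm, altProd, mul_one, iotaT_eq_single, mul_add, add_mul,
    AddMonoidAlgebra.single_mul_single, lcoeff_sub, lcoeff_add, lcoeff_single]
  norm_num only
  simp only [↓reduceIte, add_zero, zero_add]
  noncomm_ring

lemma lcoeff_braidComm_two_zero (b b' : D) :
    lcoeff (braidComm 2 (iotaT k b) (iotaT k b')) 0 =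
      (xGen k b * xGen k b' - xGen k b' * xGen k b)
        + 2 * (eGen k b * eGen k b' - eGen k b' * eGen k b) := by
  simp only [braidComm, altProd, mul_one, iotaT_eq_single, mul_add, add_mul,
    AddMonoidAlgebra.single_mul_single, lcoeff_sub, lcoeff_add, lcoeff_single]
  norm_num only
  simp only [↓reduceIte, add_zero, zero_add]
  noncomm_ring

end LaurentCoefficients

section Relations

variable {D : Type*} (N : CoxeterMatrix D)

lemma isIdempotentElem_eOm (b : D) : IsIdempotentElem (eOm k N b) := by
  rw [IsIdempotentElem, eOm, ← map_mul]
  exact RingQuot.mkRingHom_rel (OmegaRel.e_idem b)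

lemma xOm_mul_eOm_self (b : D) : xOm k N b * eOm k N b = 0 := by
  rw [xOm, eOm, ← map_mul, ← map_zero (RingQuot.mkRingHom (OmegaRel k N))]
  exact RingQuot.mkRingHom_rel (OmegaRel.xe b)

lemma mkRingHom_lcoeff_braidComm_two {b b' : D} (h : N b b' = 2) (γ : ℤ) :
    RingQuot.mkRingHom (OmegaRel k N) (lcoeff (braidComm 2 (iotaT k b) (iotaT k b')) γ) = 0 := by
  rw [← h, ← map_zero (RingQuot.mkRingHom (OmegaRel k N))]
  exact RingQuot.mkRingHom_rel (OmegaRel.braid b b' (by rw [h]; norm_num) γ)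

/-- The `v⁻¹`-coefficient of the braid relation for `m_{bb'} = 2`. -/
lemma lie_xOm_eOm_of_eq_two {b b' : D} (h : N b b' = 2) :
    ⁅xOm k N b, eOm k N b'⁆ = ⁅xOm k N b', eOm k N b⁆ := by
  have := mkRingHom_lcoeff_braidComm_two k N h (-1)
  simp only [lcoeff_braidComm_two_neg_one, map_sub, map_add, map_mul] at this
  rw [Ring.lie_def, Ring.lie_def, ← sub_eq_zero, ← neg_eq_zero, ← this]
  simp only [eOm, xOm]
  noncomm_ring

/-- The `v⁰`-coefficient of the braid relation for `m_{bb'} = 2`. -/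
lemma commute_xOm_of_eq_two {b b' : D} (h : N b b' = 2) :
    Commute (xOm k N b) (xOm k N b') := by
  have := mkRingHom_lcoeff_braidComm_two k N h 0
  simp only [lcoeff_braidComm_two_zero, map_sub, map_add, map_mul, map_ofNat] at this
  rw [← eOm, ← eOm, (commute_eOm k N b b').eq, sub_self, mul_zero, add_zero, sub_eq_zero] at this
  exact this

lemma eOm_mul_xOm_mul_eOm_of_eq_two {b b' : D} (h : N b b' = 2) :
    eOm k N b * xOm k N b' * eOm k N b = xOm k N b' * eOm k N b := by
  have := congrArg (· * eOm k N b) (lie_xOm_eOm_of_eq_two k N h)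
  simp only [Ring.lie_def, sub_mul, mul_assoc, (isIdempotentElem_eOm k N b).eq,
    (commute_eOm k N b' b).eq, ← mul_assoc (xOm k N b) (eOm k N b), xOm_mul_eOm_self,
    zero_mul, mul_zero, sub_zero] at this
  rw [mul_assoc]
  exact (sub_eq_zero.mp this.symm).symm

end Relations

section Idealizer

variable {A : Type*} [Ring A] {e : A}

/-- The idealizer `{z | z e A ⊆ e A}` of the right ideal `e A`. -/
def idealizer (he : IsIdempotentElem e) : Subring A where
  carrier := {z | e * z * e = z * e}
  mul_mem' {z w} (hz : e * z * e = z * e) (hw : e * w * e = w * e) :=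
    calc e * (z * w) * e = e * z * (e * w * e) := by rw [hw]; simp only [mul_assoc]
      _ = e * z * e * (w * e) := by simp only [mul_assoc]
      _ = z * (e * w * e) := by rw [hz]; simp only [mul_assoc]
      _ = z * w * e := by rw [hw, mul_assoc]
  one_mem' := by simp [he.eq]
  add_mem' {z w} (hz : e * z * e = z * e) (hw : e * w * e = w * e) := by
    simp only [Set.mem_ofPred_eq, mul_add, add_mul, hz, hw]
  zero_mem' := by simp
  neg_mem' {z} (hz : e * z * e = z * e) := by
    simp only [Set.mem_ofPred_eq, mul_neg, neg_mul, hz]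

lemma mem_idealizer {he : IsIdempotentElem e} {z : A} :
    z ∈ idealizer he ↔ e * z * e = z * e := Iff.rfl

lemma mem_idealizer_of_commute (he : IsIdempotentElem e) {z : A} (h : Commute e z) :
    z ∈ idealizer he := by
  rw [mem_idealizer, h.eq, mul_assoc, he.eq]

def lieStable (P : Subring A) (x : A) : Subring A where
  carrier := {z | z ∈ P ∧ ⁅x, z⁆ ∈ P}
  mul_mem' {z w} hz hw := by
    refine ⟨mul_mem hz.1 hw.1, ?_⟩
    have hleibniz : ⁅x, z * w⁆ = ⁅x, z⁆ * w + z * ⁅x, w⁆ := by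
      simp only [Ring.lie_def]
      noncomm_ring
    rw [hleibniz]
    exact add_mem (mul_mem hz.2 hw.1) (mul_mem hz.1 hw.2)
  one_mem' := ⟨one_mem P, by simp [Ring.lie_def]⟩
  add_mem' {z w} hz hw := by
    refine ⟨add_mem hz.1 hw.1, ?_⟩
    have hadd : ⁅x, z + w⁆ = ⁅x, z⁆ + ⁅x, w⁆ := by
      simp only [Ring.lie_def]
      noncomm_ring
    rw [hadd]
    exact add_mem hz.2 hw.2
  zero_mem' := ⟨zero_mem P, by simp [Ring.lie_def]⟩
  neg_mem' {z} hz := by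
    refine ⟨neg_mem hz.1, ?_⟩
    have hneg : ⁅x, -z⁆ = -⁅x, z⁆ := by
      simp only [Ring.lie_def]
      noncomm_ring
    rw [hneg]
    exact neg_mem hz.2

lemma commute_mul_mul_of_lie_mem_idealizer (he : IsIdempotentElem e) {g h x z : A}
    (hg : g * e = 0) (hh : e * h = h) (hzg : Commute z g) (hzh : Commute z h)
    (hz : ⁅x, z⁆ ∈ idealizer he) : Commute (g * x * h) z := by
  have hvanish : g * ⁅x, z⁆ * h = 0 := by
    rw [← hh, ← mul_assoc, mul_assoc g, ← mem_idealizer.mp hz, ← mul_assoc, ← mul_assoc, hg,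
      zero_mul, zero_mul, zero_mul]
  have hleft : g * x * h * z = g * x * z * h := by rw [mul_assoc _ h, ← hzh.eq, ← mul_assoc]
  have hright : z * (g * x * h) = g * z * x * h := by simp only [← mul_assoc, hzg.eq]
  rw [Commute, SemiconjBy, hleft, hright, ← sub_eq_zero, ← hvanish, Ring.lie_def]
  noncomm_ring

end Idealizer

section Idempotents

variable {C : Type*} [Fintype C] [DecidableEq C] (M : CoxeterMatrix C)

lemma eOm_mul_EOm_of_mem {c : C} {I : Finset C} (hc : c ∈ I) :
    eOm k M c * EOm k M I = EOm k M I := by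
  rw [EOm, ← mul_assoc, ← I.mul_noncommProd_erase hc (eOm k M)
    (fun _ _ _ _ _ => commute_eOm k M _ _), ← mul_assoc, (isIdempotentElem_eOm k M c).eq]

lemma EOm_mul_eOm_of_notMem {c : C} {I : Finset C} (hc : c ∉ I) :
    EOm k M I * eOm k M c = 0 := by
  rw [EOm, ← (Iᶜ).noncommProd_erase_mul (Finset.mem_compl.mpr hc) (1 - eOm k M ·)
    (fun _ _ _ _ _ => commute_oneSubEOm k M _ _), mul_assoc, mul_assoc,
    one_sub_mul, (isIdempotentElem_eOm k M c).eq, sub_self, mul_zero, mul_zero]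

lemma EOm_mem_closure (I : Finset C) : EOm k M I ∈ Subring.closure (Set.range (eOm k M)) := by
  have he : ∀ c, eOm k M c ∈ Subring.closure (Set.range (eOm k M)) :=
    fun c => Subring.subset_closure ⟨c, rfl⟩
  refine mul_mem ?_ ?_ <;> refine Submonoid.noncommProd_mem _ _ _ _ fun c _ => ?_
  · exact he c
  · exact Subring.sub_mem _ (Subring.one_mem _) (he c)

lemma Psi_le_closure :
    Psi k M ≤ Subring.closure (Set.range (eOm k M) ∪ Set.range (xOm k M)) := by
  have hE : ∀ I, EOm k M I ∈ Subring.closure (Set.range (eOm k M) ∪ Set.range (xOm k M)) :=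
    fun I => Subring.closure_mono Set.subset_union_left (EOm_mem_closure k M I)
  refine Subring.closure_le.mpr ?_
  rintro _ (⟨I, rfl⟩ | ⟨I, J, s, -, -, rfl⟩)
  · exact hE I
  · exact mul_mem (mul_mem (hE I) (Subring.subset_closure (.inr ⟨s, rfl⟩))) (hE J)

end Idempotents

section Orthogonal

variable {D : Type*} (N : CoxeterMatrix D) {c s t : D}

lemma xOm_mem_idealizer (hct : N c t = 2) : xOm k N t ∈ idealizer (isIdempotentElem_eOm k N c) :=
  eOm_mul_xOm_mul_eOm_of_eq_two k N hct

abbrev orthStable (c s : D) : Subring (Omega k N) :=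
  lieStable (idealizer (isIdempotentElem_eOm k N c)) (xOm k N s)

lemma eOm_mem_orthStable (hct : N c t = 2) (hst : N s t = 2) : eOm k N t ∈ orthStable k N c s := by
  have he : ∀ b, eOm k N b ∈ idealizer (isIdempotentElem_eOm k N c) :=
    fun b => mem_idealizer_of_commute _ (commute_eOm k N c b)
  refine ⟨he t, ?_⟩
  rw [lie_xOm_eOm_of_eq_two k N hst, Ring.lie_def]
  exact sub_mem (mul_mem (xOm_mem_idealizer k N hct) (he s))
    (mul_mem (he s) (xOm_mem_idealizer k N hct))

lemma xOm_mem_orthStable (hct : N c t = 2) (hst : N s t = 2) : xOm k N t ∈ orthStable k N c s :=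
  ⟨xOm_mem_idealizer k N hct, by
    rw [Ring.lie_def, (commute_xOm_of_eq_two k N hst).eq, sub_self]; exact zero_mem _⟩

end Orthogonal

lemma mem_centralizer_singleton {A : Type*} [Ring A] {y z : A} :
    z ∈ Subring.centralizer {y} ↔ Commute y z := by
  simp [Subring.mem_centralizer_iff, Commute, SemiconjBy]

section Parabolic

variable {k} {C D : Type*} [Fintype C] [DecidableEq C] {M : CoxeterMatrix C}
  {N : CoxeterMatrix D} {f : Omega k M →+* Omega k N} {ν : C → D}
  (he : ∀ c, f (eOm k M c) = eOm k N (ν c))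
include he

lemma map_EOm_mem {S : Subring (Omega k N)} (hS : ∀ c, eOm k N (ν c) ∈ S) (I : Finset C) :
    f (EOm k M I) ∈ S := by
  refine (Subring.closure_le (t := S.comap f)).mpr ?_ (EOm_mem_closure k M I)
  rintro _ ⟨c, rfl⟩
  simpa only [SetLike.mem_coe, Subring.mem_comap, he] using hS c

lemma eOm_mul_map_EOm_of_mem {c : C} {I : Finset C} (hc : c ∈ I) :
    eOm k N (ν c) * f (EOm k M I) = f (EOm k M I) := by
  rw [← he, ← map_mul, eOm_mul_EOm_of_mem k M hc]

lemma map_EOm_mul_eOm_of_notMem {c : C} {I : Finset C} (hc : c ∉ I) :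
    f (EOm k M I) * eOm k N (ν c) = 0 := by
  rw [← he, ← map_mul, EOm_mul_eOm_of_notMem k M hc, map_zero]

variable (hx : ∀ c, f (xOm k M c) = xOm k N (ν c))
include hx

lemma map_mem_of_mem_Psi {S : Subring (Omega k N)} (hSe : ∀ c, eOm k N (ν c) ∈ S)
    (hSx : ∀ c, xOm k N (ν c) ∈ S) {a : Omega k M} (ha : a ∈ Psi k M) : f a ∈ S := by
  refine (Subring.closure_le (t := S.comap f)).mpr ?_ (Psi_le_closure k M ha)
  rintro _ (⟨c, rfl⟩ | ⟨c, rfl⟩)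
  · simpa only [SetLike.mem_coe, Subring.mem_comap, he] using hSe c
  · simpa only [SetLike.mem_coe, Subring.mem_comap, hx] using hSx c

lemma commute_map_XOm {I J : Finset C} {c : C} (hc : c ∈ J \ I) (s : C) {z : Omega k N}
    (hze : ∀ c, Commute z (eOm k N (ν c)))
    (hz : ⁅xOm k N (ν s), z⁆ ∈ idealizer (isIdempotentElem_eOm k N (ν c))) :
    Commute (f (XOm k M I J s)) z := by
  have hzE : ∀ I, Commute z (f (EOm k M I)) := fun I => mem_centralizer_singleton.mp <|
    map_EOm_mem he (fun c => mem_centralizer_singleton.mpr (hze c)) I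
  rw [Finset.mem_sdiff] at hc
  rw [XOm, map_mul, map_mul, hx]
  exact commute_mul_mul_of_lie_mem_idealizer _ (map_EOm_mul_eOm_of_notMem he hc.2)
    (eOm_mul_map_EOm_of_mem he hc.1) (hzE I) (hzE J) hz

lemma commute_map_eOm_of_mem_Psi {C' : Type*} {μ : C' → D} (hm : ∀ c d, N (ν c) (μ d) = 2)
    {a : Omega k M} (ha : a ∈ Psi k M) (d : C') : Commute (f a) (eOm k N (μ d)) := by
  refine (mem_centralizer_singleton.mp <|
    (Subring.closure_le (t := (Subring.centralizer _).comap f)).mpr ?_ ha).symm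
  rintro _ (⟨I, rfl⟩ | ⟨I, J, s, ⟨-, c, hc⟩, -, rfl⟩)
  · exact map_EOm_mem he (fun c => mem_centralizer_singleton.mpr (commute_eOm k N _ _)) I
  · exact mem_centralizer_singleton.mpr (commute_map_XOm he hx hc s
      (fun _ => commute_eOm k N _ _) (eOm_mem_orthStable k N (hm c d) (hm s d)).2).symm

theorem commute_map_of_mem_Psi {C' : Type*} [Fintype C'] [DecidableEq C'] {M' : CoxeterMatrix C'}
    {g : Omega k M' →+* Omega k N} {μ : C' → D} (hge : ∀ d, g (eOm k M' d) = eOm k N (μ d))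
    (hgx : ∀ d, g (xOm k M' d) = xOm k N (μ d)) (hm : ∀ c d, N (ν c) (μ d) = 2)
    {a : Omega k M} (ha : a ∈ Psi k M) {b : Omega k M'} (hb : b ∈ Psi k M') :
    Commute (f a) (g b) := by
  have hbe : ∀ c, Commute (g b) (eOm k N (ν c)) :=
    commute_map_eOm_of_mem_Psi hge hgx (fun d c => (N.symmetric _ _).trans (hm c d)) hb
  have hbQ : ∀ c s, g b ∈ orthStable k N (ν c) (ν s) := fun c s =>
    map_mem_of_mem_Psi hge hgx (fun d => eOm_mem_orthStable k N (hm c d) (hm s d))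
      (fun d => xOm_mem_orthStable k N (hm c d) (hm s d)) hb
  refine (mem_centralizer_singleton.mp <|
    (Subring.closure_le (t := (Subring.centralizer {g b}).comap f)).mpr ?_ ha).symm
  rintro _ (⟨I, rfl⟩ | ⟨I, J, s, ⟨-, c, hc⟩, -, rfl⟩)
  · exact map_EOm_mem he (fun c => mem_centralizer_singleton.mpr (hbe c)) I
  · exact mem_centralizer_singleton.mpr (commute_map_XOm he hx hc s hbe (hbQ c s).2).symm

end Parabolic

theorem statement9_general {B₁ B₂ : Type*} [Fintype B₁] [DecidableEq B₁] [Fintype B₂]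
    [DecidableEq B₂] (M₁ : CoxeterMatrix B₁) (M₂ : CoxeterMatrix B₂)
    (f₁ : Omega ℤ M₁ →+* Omega ℤ (prodMatrix M₁ M₂))
    (f₂ : Omega ℤ M₂ →+* Omega ℤ (prodMatrix M₁ M₂))
    (h₁ : Parab1Cond ℤ M₁ M₂ ⇑f₁) (h₂ : Parab2Cond ℤ M₁ M₂ ⇑f₂)
    (a : Omega ℤ M₁) (ha : a ∈ Psi ℤ M₁) (b : Omega ℤ M₂) (hb : b ∈ Psi ℤ M₂) :
    Commute (f₁ a) (f₂ b) :=
  commute_map_of_mem_Psi (fun c => (h₁ c).1) (fun c => (h₁ c).2) (fun d => (h₂ d).1)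
    (fun d => (h₂ d).2) (fun _ _ => rfl) ha hb

/-- the images of `Ψ₁` and `Ψ₂` under the parabolic morphisms
`ι₁ : Ω₁ → Ω` and `ι₂ : Ω₂ → Ω` commute elementwise: `[ι₁(a), ι₂(b)] = 0`. -/
theorem statement9 {B₁ B₂ : Type*} [Fintype B₁] [DecidableEq B₁] [Fintype B₂]
    [DecidableEq B₂] (M₁ : CoxeterMatrix B₁) (M₂ : CoxeterMatrix B₂)
    {W₁ W₂ : Type*} [Group W₁] [Group W₂] [Finite W₁] [Finite W₂]
    (cs₁ : CoxeterSystem M₁ W₁) (cs₂ : CoxeterSystem M₂ W₂)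
    (cs : CoxeterSystem (prodMatrix M₁ M₂) (W₁ × W₂))
    (f₁ : Omega ℤ M₁ →+* Omega ℤ (prodMatrix M₁ M₂))
    (f₂ : Omega ℤ M₂ →+* Omega ℤ (prodMatrix M₁ M₂))
    (h₁ : Parab1Cond ℤ M₁ M₂ ⇑f₁) (h₂ : Parab2Cond ℤ M₁ M₂ ⇑f₂)
    (a : Omega ℤ M₁) (ha : a ∈ Psi ℤ M₁) (b : Omega ℤ M₂) (hb : b ∈ Psi ℤ M₂) :
    Commute (f₁ a) (f₂ b) :=
  statement9_general M₁ M₂ f₁ f₂ h₁ h₂ a ha b hb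

end WGraphPaper

end
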